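/- For integers c_1 ≥ 0 and c_2 ≥ 0, integers k_1 ≥ 1 and k_2 ≥ 2, the double series Σ_{0 < n_1 < n_2} 1/((n_1+c_1)^{k_1} (n_2+c_2)^{k_2}) converges, and its value is a ℚ-linear combination of multiple zeta values of weight at most k_1 + k_2 and depth at most 2 (together with rational numbers). -/

import Mathlib

/-!
Write `n₁ = i + 1`, `n₂ = i + j + 2` with `(i, j) ∈ ℕ × ℕ`. Raising `c₂` by one removes the terms
with `n₂ = n₁ + 1`; raising `c₁` by one removes the row `n₁ = 1` and adds the diagonal `n₁ = n₂`.
So every shifted double sum differs from `ζ(k₁, k₂)` by single sums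
`∑ₙ 1 / ((n + a) ^ p (n + b) ^ q)` with `p + q ≥ 2` and rational multiples of tails of `ζ(k₂)`.
Partial fractions in `n + a` and `n + b` lower `p + q` until only tails of `ζ(s)`, which differ
from `ζ(s)` by rationals, and the rational telescoping sums `∑ₙ (1 / (n + a) - 1 / (n + b))` remain.
-/

/-- The set of multiple zeta values of weight at most `w` and depth at most `d`
(including 1 as the empty multiple zeta value). -/
def mzvSet (w d : ℕ) : Set ℝ :=
  {x | ∃ (r : ℕ) (k : Fin r → ℕ), (∀ i, 1 ≤ k i) ∧
    (∀ i : Fin r, (i : ℕ) = r - 1 → 2 ≤ k i) ∧ (∑ i, k i) ≤ w ∧ r ≤ d ∧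
    x = ∑' n : {n : Fin r → ℕ+ // StrictMono n}, ∏ i, ((n.1 i : ℝ))⁻¹ ^ (k i)}

open Filter Topology Finset

lemma Antitone.hasSum_sub_succ {f : ℕ → ℝ} (hf : Antitone f) (hf0 : Tendsto f atTop (𝓝 0)) :
    HasSum (fun n => f n - f (n + 1)) (f 0) := by
  rw [hasSum_iff_tendsto_nat_of_nonneg (fun n => sub_nonneg.2 (hf n.le_succ))]
  simp only [sum_range_sub']
  simpa using hf0.const_sub (f 0)

lemma Antitone.hasSum_sub_add {f : ℕ → ℝ} (hf : Antitone f) (hf0 : Tendsto f atTop (𝓝 0))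
    (k : ℕ) : HasSum (fun n => f n - f (n + k)) (∑ i ∈ range k, f i) := by
  have hshift (i : ℕ) : HasSum (fun n => f (n + i) - f (n + i + 1)) (f i) := by
    have hf' : Antitone fun n => f (n + i) := hf.comp_monotone fun _ _ h => Nat.add_le_add_right h i
    simpa [add_right_comm] using hf'.hasSum_sub_succ (hf0.comp (tendsto_add_atTop_nat i))
  convert hasSum_sum fun i _ => hshift i using 1
  ext n
  simpa [add_assoc] using (sum_range_sub' (fun i => f (n + i)) k).symm

lemma hasSum_inv_add_sub_inv_add {x : ℝ} (hx : 0 < x) (k : ℕ) :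
    HasSum (fun n : ℕ => (x + n)⁻¹ - (x + (n + k : ℕ))⁻¹) (∑ i ∈ range k, (x + i)⁻¹) := by
  refine Antitone.hasSum_sub_add (f := fun n : ℕ => (x + n)⁻¹) ?_ ?_ k
  · exact fun m n hmn => inv_anti₀ (by positivity) (by gcongr)
  · exact tendsto_inv_atTop_zero.comp (tendsto_atTop_add_const_left _ x tendsto_natCast_atTop_atTop)

section MZV

variable {w d : ℕ}

lemma one_mem_mzvSet : (1 : ℝ) ∈ mzvSet w d := by
  refine ⟨0, Fin.elim0, fun i => i.elim0, fun i => i.elim0, by simp, by simp, ?_⟩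
  have : Unique {n : Fin 0 → ℕ+ // StrictMono n} :=
    ⟨⟨⟨Fin.elim0, fun i => i.elim0⟩⟩, fun n => Subtype.ext (funext fun i => i.elim0)⟩
  simp

lemma ratCast_mem_span_mzvSet (q : ℚ) : (q : ℝ) ∈ Submodule.span ℚ (mzvSet w d) := by
  simpa [Rat.smul_def] using Submodule.smul_mem _ q (Submodule.subset_span one_mem_mzvSet)

def strictMonoFinOneEquiv : {n : Fin 1 → ℕ+ // StrictMono n} ≃ ℕ :=
  (Equiv.subtypeUnivEquiv fun _ => Subsingleton.strictMono _).trans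
    ((Equiv.funUnique (Fin 1) ℕ+).trans Equiv.pnatEquivNat)

lemma tsum_inv_succ_pow_mem_mzvSet {s : ℕ} (hs : 2 ≤ s) (hsw : s ≤ w) (hd : 1 ≤ d) :
    ∑' n : ℕ, (((n : ℝ) + 1) ^ s)⁻¹ ∈ mzvSet w d := by
  refine ⟨1, ![s], by simp; omega, by simpa using hs, by simpa using hsw, hd, ?_⟩
  rw [← strictMonoFinOneEquiv.symm.tsum_eq]
  congr 1
  ext n
  simp [strictMonoFinOneEquiv, inv_pow]

def ltPairEquiv : ℕ × ℕ ≃ {p : ℕ+ × ℕ+ // p.1 < p.2} where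
  toFun x := ⟨(x.1.succPNat, (x.1 + x.2 + 1).succPNat), by
    rw [← PNat.coe_lt_coe, Nat.succPNat_coe, Nat.succPNat_coe]; omega⟩
  invFun p := (p.1.1.natPred, p.1.2.natPred - p.1.1)
  left_inv x := by
    ext <;> simp [PNat.natPred]
  right_inv p := by
    have := (PNat.coe_lt_coe _ _).2 p.2
    have := p.1.1.pos
    ext <;> apply PNat.eq <;> simp [PNat.natPred] <;> omega

lemma ltPairEquiv_fst (x : ℕ × ℕ) : ((ltPairEquiv x).1.1 : ℝ) = x.1 + 1 := by
  simp [ltPairEquiv]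

lemma ltPairEquiv_snd (x : ℕ × ℕ) : ((ltPairEquiv x).1.2 : ℝ) = x.1 + x.2 + 2 := by
  simp [ltPairEquiv]; ring

def strictMonoFinTwoEquiv : {n : Fin 2 → ℕ+ // StrictMono n} ≃ ℕ × ℕ :=
  ((finTwoArrowEquiv ℕ+).subtypeEquiv fun n => by simp [Fin.strictMono_iff_lt_succ]).trans
    ltPairEquiv.symm

lemma tsum_inv_pow_mul_pow_mem_mzvSet {k₁ k₂ : ℕ} (h₁ : 1 ≤ k₁) (h₂ : 2 ≤ k₂) (hw : k₁ + k₂ ≤ w)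
    (hd : 2 ≤ d) :
    ∑' x : ℕ × ℕ, (((x.1 : ℝ) + 1) ^ k₁ * ((x.1 : ℝ) + x.2 + 2) ^ k₂)⁻¹ ∈ mzvSet w d := by
  refine ⟨2, ![k₁, k₂], ?_, ?_, by simpa using hw, hd, ?_⟩
  · intro i; fin_cases i <;> simp <;> omega
  · intro i hi; fin_cases i <;> simp_all
  rw [← strictMonoFinTwoEquiv.symm.tsum_eq]
  congr 1
  ext x
  simp [strictMonoFinTwoEquiv, Fin.prod_univ_two, ltPairEquiv_fst, ltPairEquiv_snd, inv_pow]

end MZV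

lemma summable_inv_add_pow_mul_add_pow (a b : ℕ) {p q : ℕ} (h : 2 ≤ p + q) :
    Summable fun n : ℕ => (((n : ℝ) + 1 + a) ^ p * ((n : ℝ) + 1 + b) ^ q)⁻¹ := by
  have hζ : Summable fun n : ℕ => (((n : ℝ) + 1) ^ (p + q))⁻¹ := by
    simpa using (summable_nat_add_iff 1).2 (Real.summable_nat_pow_inv.2 h)
  refine hζ.of_nonneg_of_le (fun n => by positivity) fun n => ?_
  rw [pow_add]
  gcongr (?_ ^ _ * ?_ ^ _)⁻¹ <;> exact le_add_of_nonneg_right (Nat.cast_nonneg _)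

lemma sub_mul_inv_pow_succ_mul_pow_succ {K : Type*} [Field K] {x y : K} (hx : x ≠ 0) (hy : y ≠ 0)
    (p q : ℕ) :
    (y - x) * (x ^ (p + 1) * y ^ (q + 1))⁻¹ =
      (x ^ (p + 1) * y ^ q)⁻¹ - (x ^ p * y ^ (q + 1))⁻¹ := by
  field_simp
  ring

section Span

variable {w d : ℕ}

lemma tsum_inv_add_pow_mem_span (c : ℕ) {s : ℕ} (hs : 2 ≤ s) (hsw : s ≤ w) (hd : 1 ≤ d) :
    ∑' n : ℕ, (((n : ℝ) + 1 + c) ^ s)⁻¹ ∈ Submodule.span ℚ (mzvSet w d) := by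
  have hζ : Summable fun n : ℕ => (((n : ℝ) + 1) ^ s)⁻¹ := by
    simpa using summable_inv_add_pow_mul_add_pow 0 0 (p := 0) (q := s) (by omega)
  have hsplit : ∑' n : ℕ, (((n : ℝ) + 1 + c) ^ s)⁻¹ =
      ∑' n : ℕ, (((n : ℝ) + 1) ^ s)⁻¹ - ((∑ i ∈ range c, (((i : ℚ) + 1) ^ s)⁻¹ : ℚ) : ℝ) := by
    rw [← hζ.sum_add_tsum_nat_add c]
    push_cast
    rw [add_sub_cancel_left]
    exact tsum_congr fun n => by ring
  rw [hsplit]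
  exact sub_mem (Submodule.subset_span (tsum_inv_succ_pow_mem_mzvSet hs hsw hd))
    (ratCast_mem_span_mzvSet _)

lemma exists_rat_hasSum_inv_add_sub_inv_add (a b : ℕ) :
    ∃ r : ℚ, HasSum (fun n : ℕ => ((n : ℝ) + 1 + a)⁻¹ - ((n : ℝ) + 1 + b)⁻¹) r := by
  wlog hab : a ≤ b generalizing a b
  · obtain ⟨r, hr⟩ := this b a (by omega)
    exact ⟨-r, by simpa using hr.neg⟩
  obtain ⟨k, rfl⟩ := Nat.exists_eq_add_of_le hab
  refine ⟨∑ i ∈ range k, ((a : ℚ) + 1 + i)⁻¹, ?_⟩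
  convert hasSum_inv_add_sub_inv_add (x := (a : ℝ) + 1) (by positivity) k using 1
  · ext n; push_cast; ring_nf
  · push_cast; rfl

lemma tsum_inv_add_pow_mul_add_pow_mem_span (hd : 1 ≤ d) (a b : ℕ) {p q : ℕ} (h2 : 2 ≤ p + q)
    (hw : p + q ≤ w) :
    ∑' n : ℕ, (((n : ℝ) + 1 + a) ^ p * ((n : ℝ) + 1 + b) ^ q)⁻¹ ∈
      Submodule.span ℚ (mzvSet w d) := by
  induction hm : p + q using Nat.strong_induction_on generalizing p q with
  | _ m ih =>
  subst hm
  rcases p with _ | p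
  · simpa using tsum_inv_add_pow_mem_span b h2 hw hd
  rcases q with _ | q
  · simpa using tsum_inv_add_pow_mem_span a h2 hw hd
  obtain rfl | hab := eq_or_ne a b
  · simpa [← pow_add] using tsum_inv_add_pow_mem_span a h2 hw hd
  have hba : (b : ℚ) - a ≠ 0 := sub_ne_zero.2 (by exact_mod_cast hab.symm)
  have hpf (n : ℕ) : (((n : ℝ) + 1 + a) ^ (p + 1) * ((n : ℝ) + 1 + b) ^ (q + 1))⁻¹ =
      (((b : ℚ) - a : ℚ) : ℝ)⁻¹ * ((((n : ℝ) + 1 + a) ^ (p + 1) * ((n : ℝ) + 1 + b) ^ q)⁻¹ -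
        (((n : ℝ) + 1 + a) ^ p * ((n : ℝ) + 1 + b) ^ (q + 1))⁻¹) := by
    rw [eq_inv_mul_iff_mul_eq₀ (by exact_mod_cast hba), ← sub_mul_inv_pow_succ_mul_pow_succ
      (by positivity) (by positivity)]
    push_cast
    ring
  rw [tsum_congr hpf, tsum_mul_left, ← Rat.cast_inv, ← Rat.smul_def]
  refine Submodule.smul_mem _ _ ?_
  by_cases hpq : p + q = 0
  · obtain ⟨rfl, rfl⟩ : p = 0 ∧ q = 0 := by omega
    obtain ⟨r, hr⟩ := exists_rat_hasSum_inv_add_sub_inv_add a b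
    simpa [hr.tsum_eq] using ratCast_mem_span_mzvSet r
  rw [(summable_inv_add_pow_mul_add_pow a b (by omega)).tsum_sub
    (summable_inv_add_pow_mul_add_pow a b (by omega))]
  exact sub_mem (ih _ (by omega) (by omega) (by omega) rfl)
    (ih _ (by omega) (by omega) (by omega) rfl)

end Span

section ProdNat

variable {G : Type*} [AddCommGroup G] [UniformSpace G] [IsUniformAddGroup G] [CompleteSpace G]
  [T0Space G] {f : ℕ × ℕ → G}

lemma tsum_prod_nat_succ_fst (hf : Summable f) :
    ∑' x : ℕ × ℕ, f (x.1 + 1, x.2) = ∑' x, f x - ∑' j, f (0, j) := by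
  have hshift : Summable fun x : ℕ × ℕ => f (x.1 + 1, x.2) :=
    hf.comp_injective (i := fun x : ℕ × ℕ => (x.1 + 1, x.2)) fun x y h => by
      simpa [Prod.ext_iff] using h
  rw [hshift.tsum_prod, hf.tsum_prod, hf.prod.tsum_eq_zero_add, add_sub_cancel_left]

lemma tsum_prod_nat_succ_snd (hf : Summable f) :
    ∑' x : ℕ × ℕ, f (x.1, x.2 + 1) = ∑' x, f x - ∑' i, f (i, 0) := by
  have hshift : Summable fun x : ℕ × ℕ => f (x.1, x.2 + 1) :=
    hf.comp_injective (i := fun x : ℕ × ℕ => (x.1, x.2 + 1)) fun x y h => by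
      simpa [Prod.ext_iff] using h
  have hedge : Summable fun i => f (i, 0) :=
    hf.comp_injective (i := fun i => (i, 0)) fun x y h => by simpa using h
  rw [hshift.tsum_prod, hf.tsum_prod, ← hf.prod.tsum_sub hedge]
  congr 1
  ext i
  rw [(hf.prod_factor i).tsum_eq_zero_add, add_sub_cancel_left]

end ProdNat

noncomputable def pairTerm (k₁ k₂ c₁ c₂ : ℕ) (x : ℕ × ℕ) : ℝ :=
  (((x.1 : ℝ) + 1 + c₁) ^ k₁ * ((x.1 : ℝ) + x.2 + 2 + c₂) ^ k₂)⁻¹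

section PairTerm

variable {k₁ k₂ : ℕ} (c₁ c₂ : ℕ)

lemma pairTerm_nonneg (x : ℕ × ℕ) : 0 ≤ pairTerm k₁ k₂ c₁ c₂ x := by
  unfold pairTerm; positivity

lemma pairTerm_succ_right (x : ℕ × ℕ) :
    pairTerm k₁ k₂ c₁ (c₂ + 1) x = pairTerm k₁ k₂ c₁ c₂ (x.1, x.2 + 1) := by
  simp only [pairTerm]; push_cast; ring_nf

lemma pairTerm_succ_left (x : ℕ × ℕ) :
    pairTerm k₁ k₂ (c₁ + 1) c₂ (x.1, x.2 + 1) = pairTerm k₁ k₂ c₁ c₂ (x.1 + 1, x.2) := by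
  simp only [pairTerm]; push_cast; ring_nf

lemma pairTerm_le_telescoping (h₁ : 1 ≤ k₁) (h₂ : 2 ≤ k₂) (i j : ℕ) :
    pairTerm k₁ k₂ c₁ c₂ (i, j) ≤
      ((i : ℝ) + 1)⁻¹ * ((((i : ℝ) + 1) + j)⁻¹ - (((i : ℝ) + 1) + (j + 1 : ℕ))⁻¹) := by
  have hc₁ : (0 : ℝ) ≤ c₁ := c₁.cast_nonneg
  have hc₂ : (0 : ℝ) ≤ c₂ := c₂.cast_nonneg
  have hdiff : (((i : ℝ) + 1) + j)⁻¹ - (((i : ℝ) + 1) + (j + 1 : ℕ))⁻¹ =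
      (((i : ℝ) + 1 + j) * ((i : ℝ) + 1 + j + 1))⁻¹ := by
    push_cast
    field_simp
    ring
  have hfst : (i : ℝ) + 1 ≤ ((i : ℝ) + 1 + c₁) ^ k₁ :=
    (le_add_of_nonneg_right hc₁).trans (le_self_pow₀ (by linarith) (by omega))
  have hsnd : ((i : ℝ) + 1 + j) * ((i : ℝ) + 1 + j + 1) ≤ ((i : ℝ) + j + 2 + c₂) ^ k₂ :=
    calc _ ≤ ((i : ℝ) + j + 2 + c₂) ^ 2 := by nlinarith
      _ ≤ _ := pow_le_pow_right₀ (by linarith) h₂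
  rw [hdiff, ← mul_inv]
  exact inv_anti₀ (by positivity) (mul_le_mul hfst hsnd (by positivity) (by positivity))

lemma summable_pairTerm (h₁ : 1 ≤ k₁) (h₂ : 2 ≤ k₂) : Summable (pairTerm k₁ k₂ c₁ c₂) := by
  have hrow (i : ℕ) := (hasSum_inv_add_sub_inv_add (x := (i : ℝ) + 1) (by positivity) 1).mul_left
    ((i : ℝ) + 1)⁻¹
  have hrow_summable (i : ℕ) : Summable fun j => pairTerm k₁ k₂ c₁ c₂ (i, j) :=
    (hrow i).summable.of_nonneg_of_le (fun j => pairTerm_nonneg c₁ c₂ _)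
      (pairTerm_le_telescoping c₁ c₂ h₁ h₂ i)
  rw [summable_prod_of_nonneg (pairTerm_nonneg c₁ c₂)]
  refine ⟨hrow_summable, ?_⟩
  refine (summable_nat_add_iff 1).2 (Real.summable_nat_pow_inv.2 one_lt_two) |>.of_nonneg_of_le
    (fun i => tsum_nonneg fun j => pairTerm_nonneg c₁ c₂ _) fun i => ?_
  simpa [sq] using
    hasSum_le (pairTerm_le_telescoping c₁ c₂ h₁ h₂ i) (hrow_summable i).hasSum (hrow i)

lemma tsum_pairTerm_succ_right (h₁ : 1 ≤ k₁) (h₂ : 2 ≤ k₂) :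
    ∑' x, pairTerm k₁ k₂ c₁ (c₂ + 1) x =
      ∑' x, pairTerm k₁ k₂ c₁ c₂ x - ∑' i, pairTerm k₁ k₂ c₁ c₂ (i, 0) := by
  rw [tsum_congr (pairTerm_succ_right c₁ c₂)]
  exact tsum_prod_nat_succ_snd (summable_pairTerm c₁ c₂ h₁ h₂)

lemma tsum_pairTerm_succ_left (h₁ : 1 ≤ k₁) (h₂ : 2 ≤ k₂) :
    ∑' x, pairTerm k₁ k₂ (c₁ + 1) c₂ x =
      ∑' x, pairTerm k₁ k₂ c₁ c₂ x - ∑' j, pairTerm k₁ k₂ c₁ c₂ (0, j) +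
        ∑' i, pairTerm k₁ k₂ (c₁ + 1) c₂ (i, 0) := by
  have h := tsum_prod_nat_succ_snd (summable_pairTerm (c₁ + 1) c₂ h₁ h₂)
  simp only [pairTerm_succ_left] at h
  rw [tsum_prod_nat_succ_fst (summable_pairTerm c₁ c₂ h₁ h₂)] at h
  linear_combination -h

variable {w d : ℕ}

lemma tsum_pairTerm_snd_zero_mem_span (h : 2 ≤ k₁ + k₂) (hw : k₁ + k₂ ≤ w) (hd : 1 ≤ d) :
    ∑' i, pairTerm k₁ k₂ c₁ c₂ (i, 0) ∈ Submodule.span ℚ (mzvSet w d) := by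
  convert tsum_inv_add_pow_mul_add_pow_mem_span hd c₁ (c₂ + 1) h hw using 3
  simp only [pairTerm]; push_cast; ring_nf

lemma tsum_pairTerm_fst_zero_mem_span (h₂ : 2 ≤ k₂) (hw : k₂ ≤ w) (hd : 1 ≤ d) :
    ∑' j, pairTerm k₁ k₂ c₁ c₂ (0, j) ∈ Submodule.span ℚ (mzvSet w d) := by
  have hrow (j : ℕ) : pairTerm k₁ k₂ c₁ c₂ (0, j) =
      (((1 + c₁ : ℚ) ^ k₁)⁻¹ : ℚ) * (((j : ℝ) + 1 + (c₂ + 1 : ℕ)) ^ k₂)⁻¹ := by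
    simp only [pairTerm, mul_inv]; push_cast; ring_nf
  rw [tsum_congr hrow, tsum_mul_left, ← Rat.smul_def]
  exact Submodule.smul_mem _ _ (tsum_inv_add_pow_mem_span (c₂ + 1) h₂ hw hd)

lemma tsum_pairTerm_mem_span (h₁ : 1 ≤ k₁) (h₂ : 2 ≤ k₂) (hw : k₁ + k₂ ≤ w) (hd : 2 ≤ d) :
    ∑' x, pairTerm k₁ k₂ c₁ c₂ x ∈ Submodule.span ℚ (mzvSet w d) := by
  induction c₁ generalizing c₂ with
  | zero =>
    induction c₂ with
    | zero =>
      refine Submodule.subset_span ?_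
      simpa [pairTerm] using tsum_inv_pow_mul_pow_mem_mzvSet h₁ h₂ hw hd
    | succ c₂ ih =>
      rw [tsum_pairTerm_succ_right 0 c₂ h₁ h₂]
      exact sub_mem ih (tsum_pairTerm_snd_zero_mem_span 0 c₂ (by omega) hw (by omega))
  | succ c₁ ih =>
    rw [tsum_pairTerm_succ_left c₁ c₂ h₁ h₂]
    exact add_mem (sub_mem (ih c₂) (tsum_pairTerm_fst_zero_mem_span c₁ c₂ h₂ (by omega) (by omega)))
      (tsum_pairTerm_snd_zero_mem_span (c₁ + 1) c₂ (by omega) hw (by omega))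

end PairTerm

/-- Σ_{0<n₁<n₂} 1/((n₁+c₁)^{k₁}(n₂+c₂)^{k₂}) converges and lies in the ℚ-span of
multiple zeta values of weight ≤ k₁+k₂ and depth ≤ 2. -/
theorem stmt_9 (c₁ c₂ : ℕ) (k₁ k₂ : ℕ) (hk₁ : 1 ≤ k₁) (hk₂ : 2 ≤ k₂) :
    Summable (fun p : {p : ℕ+ × ℕ+ // p.1 < p.2} =>
        (1 : ℝ) / (((p.1.1 : ℝ) + c₁) ^ k₁ * ((p.1.2 : ℝ) + c₂) ^ k₂)) ∧
    (∑' p : {p : ℕ+ × ℕ+ // p.1 < p.2},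
        (1 : ℝ) / (((p.1.1 : ℝ) + c₁) ^ k₁ * ((p.1.2 : ℝ) + c₂) ^ k₂))
      ∈ Submodule.span ℚ (mzvSet (k₁ + k₂) 2) := by
  have hterm (x : ℕ × ℕ) : (1 : ℝ) / ((((ltPairEquiv x).1.1 : ℝ) + c₁) ^ k₁ *
      (((ltPairEquiv x).1.2 : ℝ) + c₂) ^ k₂) = pairTerm k₁ k₂ c₁ c₂ x := by
    rw [ltPairEquiv_fst, ltPairEquiv_snd, one_div, pairTerm]
  constructor
  · rw [← ltPairEquiv.summable_iff]
    exact (summable_pairTerm c₁ c₂ hk₁ hk₂).congr fun x => (hterm x).symm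
  · rw [← ltPairEquiv.tsum_eq, tsum_congr hterm]
    exact tsum_pairTerm_mem_span c₁ c₂ hk₁ hk₂ le_rfl le_rfl
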